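/- arXiv:2208.07540 — 2 statements merged into one kernel-verified Lean document; each statement's English description precedes it below -/
import Mathlib

section
/- (Lemma 2.2, characterization of exact interpolation.) Let n ≥ 1, ε > 0, A ∈ ℂ^{n×n}, and let 𝒱 be a nonzero linear subspace of ℂⁿ. The following are equivalent: (i) Λ^𝒱_ε(A) is nonempty and α^𝒱_ε(A) = α_ε(A); (ii) there exists z̃ ∈ ℂ with σ_min(A − z̃I) ≤ ε and Re z̃ = α_ε(A), and 𝒱 contains a unit vector v with ‖(A − z̃I)v‖₂ = σ_min(A − z̃I) (i.e., a right singular vector of A − z̃I corresponding to σ_min(A − z̃I)). -/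
noncomputable def enorm2 {ι : Type*} [Fintype ι] (v : ι → ℂ) : ℝ :=
  ‖(WithLp.equiv 2 (ι → ℂ)).symm v‖

noncomputable def sigMin {ι κ : Type*} [Fintype ι] [Fintype κ] (M : Matrix ι κ ℂ) : ℝ :=
  sInf {r : ℝ | ∃ w : κ → ℂ, enorm2 w = 1 ∧ r = enorm2 (M.mulVec w)}

noncomputable def sigV {n : ℕ} (𝒱 : Submodule ℂ (Fin n → ℂ))
    (A : Matrix (Fin n) (Fin n) ℂ) (z : ℂ) : ℝ :=
  sInf {r : ℝ | ∃ v ∈ 𝒱, enorm2 v = 1 ∧ r = enorm2 ((A - z • 1).mulVec v)}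

noncomputable def pspec {n : ℕ} (ε : ℝ) (A : Matrix (Fin n) (Fin n) ℂ) : Set ℂ :=
  {z | sigMin (A - z • 1) ≤ ε}

noncomputable def psa {n : ℕ} (ε : ℝ) (A : Matrix (Fin n) (Fin n) ℂ) : ℝ :=
  sSup (Complex.re '' pspec ε A)

noncomputable def pspecV {n : ℕ} (ε : ℝ) (𝒱 : Submodule ℂ (Fin n → ℂ))
    (A : Matrix (Fin n) (Fin n) ℂ) : Set ℂ :=
  {z | sigV 𝒱 A z ≤ ε}

noncomputable def psaV {n : ℕ} (ε : ℝ) (𝒱 : Submodule ℂ (Fin n → ℂ))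
    (A : Matrix (Fin n) (Fin n) ℂ) : ℝ :=
  sSup (Complex.re '' pspecV ε 𝒱 A)

noncomputable def Amap {n d κ : ℕ} (f : Fin κ → EuclideanSpace ℝ (Fin d) → ℝ)
    (As : Fin κ → Matrix (Fin n) (Fin n) ℂ) (x : EuclideanSpace ℝ (Fin d)) :
    Matrix (Fin n) (Fin n) ℂ :=
  ∑ j, (f j x : ℂ) • As j

noncomputable def opNorm2 {n : ℕ} (Δ : Matrix (Fin n) (Fin n) ℂ) : ℝ :=
  sSup {r : ℝ | ∃ w : Fin n → ℂ, enorm2 w = 1 ∧ r = enorm2 (Δ.mulVec w)}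

/-!
Since `z ↦ σ^𝒱(A, z)` is 1-Lipschitz and `σ^𝒱(A, z) ≥ |z| - ‖A‖`, the set `Λ^𝒱_ε(A)` is compact,
so `α^𝒱_ε(A)` is attained at some `z`. If it equals `α_ε(A)`, then `z` is a rightmost point of
`Λ_ε(A)`, so `σ_min(A - zI) = ε` (otherwise `z` could be moved to the right inside `Λ_ε(A)`);
then `ε ≥ σ^𝒱(A, z) ≥ σ_min(A - zI)` forces equality, and a minimizer of `σ^𝒱(A, z)` is a right
singular vector. Conversely, such a `z` lies in `Λ^𝒱_ε(A) ⊆ Λ_ε(A)`. Since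
`σ_min(A - zI) = σ^⊤(A, z)`, all of this holds with `⊤` replaced by any subspace `𝒲 ≥ 𝒱`.
-/
open Matrix WithLp

section enorm2

variable {ι : Type*} [Fintype ι]

lemma enorm2_def (v : ι → ℂ) : enorm2 v = ‖toLp 2 v‖ := rfl

lemma continuous_enorm2 : Continuous (enorm2 : (ι → ℂ) → ℝ) :=
  (PiLp.continuous_toLp 2 _).norm

lemma isCompact_setOf_mem_and_enorm2_eq_one {S : Set (ι → ℂ)} (hS : IsClosed S) :
    IsCompact {v | v ∈ S ∧ enorm2 v = 1} := by
  have hsphere : IsCompact (ofLp ⁻¹' S ∩ Metric.sphere (0 : EuclideanSpace ℂ ι) 1) :=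
    (isCompact_sphere _ _).inter_left (hS.preimage (PiLp.continuous_ofLp 2 _))
  convert hsphere.image (PiLp.continuous_ofLp 2 _) using 1
  ext v
  constructor
  · rintro ⟨hvS, hv1⟩
    exact ⟨toLp 2 v, ⟨hvS, by simpa [enorm2_def] using hv1⟩, rfl⟩
  · rintro ⟨x, ⟨hxS, hx1⟩, rfl⟩
    exact ⟨hxS, by simpa [enorm2_def] using hx1⟩

lemma Submodule.exists_mem_enorm2_eq_one {𝒱 : Submodule ℂ (ι → ℂ)} (h𝒱 : 𝒱 ≠ ⊥) :
    ∃ v ∈ 𝒱, enorm2 v = 1 := by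
  obtain ⟨x, hx𝒱, hx0⟩ := 𝒱.exists_mem_ne_zero_of_ne_bot h𝒱
  have hx : ‖toLp 2 x‖ ≠ 0 := by simpa using hx0
  refine ⟨((‖toLp 2 x‖⁻¹ : ℝ) : ℂ) • x, 𝒱.smul_mem _ hx𝒱, ?_⟩
  rw [enorm2_def, toLp_smul, norm_smul, Complex.norm_real, norm_inv, norm_norm,
    inv_mul_cancel₀ hx]

end enorm2

section sigV

variable {n : ℕ} {𝒱 𝒲 : Submodule ℂ (Fin n → ℂ)} (A : Matrix (Fin n) (Fin n) ℂ)

lemma sigMin_sub_smul_one (z : ℂ) : sigMin (A - z • 1) = sigV ⊤ A z := by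
  simp [sigMin, sigV]

lemma sigV_eq_sInf_image (z : ℂ) :
    sigV 𝒱 A z = sInf ((fun v ↦ enorm2 ((A - z • 1) *ᵥ v)) '' {v | v ∈ 𝒱 ∧ enorm2 v = 1}) := by
  rw [sigV]
  congr 1
  ext r
  simp only [Set.mem_image, Set.mem_ofPred_eq, and_assoc, eq_comm]

lemma sigV_le_enorm2 (z : ℂ) {v : Fin n → ℂ} (hv : v ∈ 𝒱) (hv1 : enorm2 v = 1) :
    sigV 𝒱 A z ≤ enorm2 ((A - z • 1) *ᵥ v) :=
  csInf_le ⟨0, by rintro r ⟨w, -, -, rfl⟩; exact norm_nonneg _⟩ ⟨v, hv, hv1, rfl⟩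

lemma exists_enorm2_eq_sigV (h𝒱 : 𝒱 ≠ ⊥) (z : ℂ) :
    ∃ v ∈ 𝒱, enorm2 v = 1 ∧ enorm2 ((A - z • 1) *ᵥ v) = sigV 𝒱 A z := by
  obtain ⟨v, ⟨hv, hv1⟩, hmin⟩ :=
    (isCompact_setOf_mem_and_enorm2_eq_one 𝒱.closed_of_finiteDimensional).exists_sInf_image_eq
      (𝒱.exists_mem_enorm2_eq_one h𝒱)
      (continuous_enorm2.comp (A - z • 1).mulVecLin.continuous_of_finiteDimensional).continuousOn
  exact ⟨v, hv, hv1, by rw [sigV_eq_sInf_image]; exact hmin.symm⟩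

lemma enorm2_sub_smul_one_mulVec (z : ℂ) (v : Fin n → ℂ) :
    enorm2 ((A - z • 1) *ᵥ v) = ‖toEuclideanCLM (𝕜 := ℂ) A (toLp 2 v) - z • toLp 2 v‖ := by
  rw [enorm2_def, sub_mulVec, smul_mulVec, one_mulVec, toLp_sub, toLp_smul, toEuclideanCLM_toLp]

lemma sigV_anti (h𝒱 : 𝒱 ≠ ⊥) (h : 𝒱 ≤ 𝒲) (z : ℂ) : sigV 𝒲 A z ≤ sigV 𝒱 A z := by
  obtain ⟨v, hv, hv1, hvmin⟩ := exists_enorm2_eq_sigV A h𝒱 z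
  exact hvmin ▸ sigV_le_enorm2 A z (h hv) hv1

lemma sigV_add_le (h𝒱 : 𝒱 ≠ ⊥) (z t : ℂ) : sigV 𝒱 A (z + t) ≤ sigV 𝒱 A z + ‖t‖ := by
  obtain ⟨v, hv, hv1, hvmin⟩ := exists_enorm2_eq_sigV A h𝒱 z
  set T := toEuclideanCLM (𝕜 := ℂ) A
  set x := toLp 2 v
  calc sigV 𝒱 A (z + t) ≤ ‖T x - (z + t) • x‖ := by
        rw [← enorm2_sub_smul_one_mulVec]; exact sigV_le_enorm2 A _ hv hv1
    _ = ‖(T x - z • x) - t • x‖ := by rw [add_smul, sub_sub]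
    _ ≤ ‖T x - z • x‖ + ‖t • x‖ := norm_sub_le _ _
    _ = sigV 𝒱 A z + ‖t‖ := by
        rw [← enorm2_sub_smul_one_mulVec, hvmin, norm_smul, ← enorm2_def, hv1, mul_one]

lemma lipschitzWith_sigV (h𝒱 : 𝒱 ≠ ⊥) : LipschitzWith 1 (sigV 𝒱 A) :=
  LipschitzWith.of_le_add fun z w ↦ by
    simpa [dist_eq_norm] using sigV_add_le A h𝒱 w (z - w)

lemma norm_sub_opNorm_le_sigV (h𝒱 : 𝒱 ≠ ⊥) (z : ℂ) :
    ‖z‖ - ‖toEuclideanCLM (𝕜 := ℂ) A‖ ≤ sigV 𝒱 A z := by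
  obtain ⟨v, hv, hv1, hvmin⟩ := exists_enorm2_eq_sigV A h𝒱 z
  set T := toEuclideanCLM (𝕜 := ℂ) A
  set x := toLp 2 v
  have hx : ‖x‖ = 1 := hv1
  calc ‖z‖ - ‖T‖ ≤ ‖z • x‖ - ‖T x‖ := by
        rw [norm_smul, hx, mul_one]
        gcongr
        simpa [hx] using T.le_opNorm x
    _ ≤ ‖T x - z • x‖ := by rw [norm_sub_rev]; exact norm_sub_norm_le _ _
    _ = sigV 𝒱 A z := by rw [← enorm2_sub_smul_one_mulVec, hvmin]

end sigV

section pseudospectrum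

variable {n : ℕ} {ε : ℝ} {𝒱 𝒲 : Submodule ℂ (Fin n → ℂ)} (A : Matrix (Fin n) (Fin n) ℂ)

lemma pspec_eq_pspecV_top : pspec ε A = pspecV ε ⊤ A := by
  simp only [pspec, pspecV, sigMin_sub_smul_one]

lemma psa_eq_psaV_top : psa ε A = psaV ε ⊤ A := by
  rw [psa, psaV, pspec_eq_pspecV_top]

lemma pspecV_mono (h𝒱 : 𝒱 ≠ ⊥) (h : 𝒱 ≤ 𝒲) : pspecV ε 𝒱 A ⊆ pspecV ε 𝒲 A :=
  fun z hz ↦ (sigV_anti A h𝒱 h z).trans hz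

lemma isCompact_pspecV (h𝒱 : 𝒱 ≠ ⊥) : IsCompact (pspecV ε 𝒱 A) := by
  refine Metric.isCompact_of_isClosed_isBounded
    (isClosed_Iic.preimage (lipschitzWith_sigV A h𝒱).continuous)
    (Metric.isBounded_closedBall (x := 0) (r := ε + ‖toEuclideanCLM (𝕜 := ℂ) A‖) |>.subset ?_)
  intro z hz
  rw [mem_closedBall_zero_iff]
  linarith [norm_sub_opNorm_le_sigV A h𝒱 z, show sigV 𝒱 A z ≤ ε from hz]

lemma bddAbove_re_pspecV (h𝒱 : 𝒱 ≠ ⊥) : BddAbove (Complex.re '' pspecV ε 𝒱 A) :=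
  ((isCompact_pspecV A h𝒱).image Complex.continuous_re).bddAbove

lemma psaV_mono (h𝒱 : 𝒱 ≠ ⊥) (h : 𝒱 ≤ 𝒲) (hne : (pspecV ε 𝒱 A).Nonempty) :
    psaV ε 𝒱 A ≤ psaV ε 𝒲 A :=
  csSup_le_csSup (bddAbove_re_pspecV A (ne_bot_of_le_ne_bot h𝒱 h)) (hne.image _)
    (Set.image_mono (pspecV_mono A h𝒱 h))

lemma re_le_psaV (h𝒱 : 𝒱 ≠ ⊥) {z : ℂ} (hz : z ∈ pspecV ε 𝒱 A) : z.re ≤ psaV ε 𝒱 A :=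
  le_csSup (bddAbove_re_pspecV A h𝒱) (Set.mem_image_of_mem _ hz)

lemma exists_re_eq_psaV (h𝒱 : 𝒱 ≠ ⊥) (hne : (pspecV ε 𝒱 A).Nonempty) :
    ∃ z ∈ pspecV ε 𝒱 A, z.re = psaV ε 𝒱 A := by
  obtain ⟨z, hz, hmax⟩ :=
    (isCompact_pspecV A h𝒱).exists_sSup_image_eq hne Complex.continuous_re.continuousOn
  exact ⟨z, hz, hmax.symm⟩

lemma sigV_eq_of_re_eq_psaV (h𝒱 : 𝒱 ≠ ⊥) {z : ℂ} (hz : z ∈ pspecV ε 𝒱 A)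
    (hre : z.re = psaV ε 𝒱 A) : sigV 𝒱 A z = ε := by
  refine le_antisymm hz (not_lt.mp fun hlt ↦ ?_)
  set t := ε - sigV 𝒱 A z
  have ht : 0 < t := sub_pos.mpr hlt
  have hzt : z + t ∈ pspecV ε 𝒱 A := by
    have := sigV_add_le A h𝒱 z t
    rw [Complex.norm_real, Real.norm_of_nonneg ht.le] at this
    exact this.trans_eq (add_sub_cancel _ _)
  have := re_le_psaV A h𝒱 hzt
  rw [Complex.add_re, Complex.ofReal_re, hre] at this
  linarith

theorem pspecV_nonempty_and_psaV_eq_iff (h𝒱 : 𝒱 ≠ ⊥) (h : 𝒱 ≤ 𝒲) :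
    ((pspecV ε 𝒱 A).Nonempty ∧ psaV ε 𝒱 A = psaV ε 𝒲 A) ↔
      ∃ z : ℂ, sigV 𝒲 A z ≤ ε ∧ z.re = psaV ε 𝒲 A ∧
        ∃ v ∈ 𝒱, enorm2 v = 1 ∧ enorm2 ((A - z • 1) *ᵥ v) = sigV 𝒲 A z := by
  have h𝒲 : 𝒲 ≠ ⊥ := ne_bot_of_le_ne_bot h𝒱 h
  constructor
  · rintro ⟨hne, heq⟩
    obtain ⟨z, hz, hre⟩ := exists_re_eq_psaV A h𝒱 hne
    have hz𝒲 : sigV 𝒲 A z = ε :=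
      sigV_eq_of_re_eq_psaV A h𝒲 (pspecV_mono A h𝒱 h hz) (hre.trans heq)
    have hsigV : sigV 𝒱 A z = sigV 𝒲 A z :=
      le_antisymm (hz.trans_eq hz𝒲.symm) (sigV_anti A h𝒱 h z)
    obtain ⟨v, hv, hv1, hvmin⟩ := exists_enorm2_eq_sigV A h𝒱 z
    exact ⟨z, hz𝒲.le, hre.trans heq, v, hv, hv1, hvmin.trans hsigV⟩
  · rintro ⟨z, hz, hre, v, hv, hv1, hvmin⟩
    have hz𝒱 : z ∈ pspecV ε 𝒱 A := (sigV_le_enorm2 A z hv hv1).trans (hvmin.trans_le hz)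
    exact ⟨⟨z, hz𝒱⟩, (psaV_mono A h𝒱 h ⟨z, hz𝒱⟩).antisymm (hre ▸ re_le_psaV A h𝒱 hz𝒱)⟩

end pseudospectrum

theorem stmt8_general {n : ℕ} {ε : ℝ}
    (A : Matrix (Fin n) (Fin n) ℂ) (𝒱 : Submodule ℂ (Fin n → ℂ)) (h𝒱 : 𝒱 ≠ ⊥) :
    ((pspecV ε 𝒱 A).Nonempty ∧ psaV ε 𝒱 A = psa ε A) ↔
      (∃ z : ℂ, sigMin (A - z • 1) ≤ ε ∧ z.re = psa ε A ∧
        ∃ v ∈ 𝒱, enorm2 v = 1 ∧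
          enorm2 ((A - z • 1).mulVec v) = sigMin (A - z • 1)) := by
  simpa only [psa_eq_psaV_top, sigMin_sub_smul_one] using
    pspecV_nonempty_and_psaV_eq_iff A h𝒱 le_top

theorem stmt8 {n : ℕ} (hn : 1 ≤ n) {ε : ℝ} (hε : 0 < ε)
    (A : Matrix (Fin n) (Fin n) ℂ) (𝒱 : Submodule ℂ (Fin n → ℂ)) (h𝒱 : 𝒱 ≠ ⊥) :
    ((pspecV ε 𝒱 A).Nonempty ∧ psaV ε 𝒱 A = psa ε A) ↔
      (∃ z : ℂ, sigMin (A - z • 1) ≤ ε ∧ z.re = psa ε A ∧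
        ∃ v ∈ 𝒱, enorm2 v = 1 ∧
          enorm2 ((A - z • 1).mulVec v) = sigMin (A - z • 1)) :=
  stmt8_general A 𝒱 h𝒱
end

section
/- (Activity of the constraint at a rightmost point, complementary slackness established in the proof of Theorem 2.4.) Let n ≥ 1, A ∈ ℂ^{n×n}, and ε > 0. If z̃ ∈ Λ_ε(A) satisfies Re z̃ = α_ε(A) (z̃ is a rightmost point of the ε-pseudospectrum), then σ_min(A − z̃I) = ε. -/
/-!
Perturbing a matrix by `N` moves `σ_min` by at most the operator norm `‖N‖`. Hence, if
`σ_min(A - z̃I) < ε`, the point `z̃ + (ε - σ_min(A - z̃I))` still lies in `Λ_ε(A)` and has larger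
real part than `z̃`. The same perturbation bound gives `‖z‖ ≤ σ_min(A - zI) + ‖A‖`, so `Λ_ε(A)` is
bounded to the right and `α_ε(A)` is a genuine supremum.
-/

open scoped Matrix Matrix.Norms.L2Operator

section Enorm2

variable {ι : Type*} [Fintype ι]

lemma enorm2_eq_norm_toLp (v : ι → ℂ) : enorm2 v = ‖WithLp.toLp 2 v‖ := rfl

lemma enorm2_add_le (v w : ι → ℂ) : enorm2 (v + w) ≤ enorm2 v + enorm2 w :=
  norm_add_le (WithLp.toLp 2 v) (WithLp.toLp 2 w)

lemma enorm2_smul (c : ℂ) (v : ι → ℂ) : enorm2 (c • v) = ‖c‖ * enorm2 v :=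
  norm_smul c (WithLp.toLp 2 v)

lemma exists_enorm2_eq_one [Nonempty ι] : ∃ w : ι → ℂ, enorm2 w = 1 := by
  classical
  exact ⟨Pi.single (Classical.arbitrary ι) 1, by
    rw [enorm2_eq_norm_toLp, PiLp.toLp_single, PiLp.norm_single, norm_one]⟩

lemma enorm2_mulVec_le {κ : Type*} [Fintype κ] [DecidableEq κ] (M : Matrix ι κ ℂ) (w : κ → ℂ) :
    enorm2 (M *ᵥ w) ≤ ‖M‖ * enorm2 w :=
  M.l2_opNorm_mulVec (WithLp.toLp 2 w)

end Enorm2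

section SigMin

variable {ι κ : Type*} [Fintype ι] [Fintype κ]

lemma sigMin_le_enorm2_mulVec (M : Matrix ι κ ℂ) {w : κ → ℂ} (hw : enorm2 w = 1) :
    sigMin M ≤ enorm2 (M *ᵥ w) :=
  csInf_le ⟨0, by rintro r ⟨v, -, rfl⟩; exact norm_nonneg _⟩ ⟨w, hw, rfl⟩

lemma le_sigMin [Nonempty κ] {M : Matrix ι κ ℂ} {r : ℝ}
    (h : ∀ w, enorm2 w = 1 → r ≤ enorm2 (M *ᵥ w)) : r ≤ sigMin M := by
  obtain ⟨w, hw⟩ := exists_enorm2_eq_one (ι := κ)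
  refine le_csInf ⟨_, w, hw, rfl⟩ ?_
  rintro r ⟨v, hv, rfl⟩
  exact h v hv

lemma sigMin_add_le [Nonempty κ] [DecidableEq κ] (M N : Matrix ι κ ℂ) :
    sigMin (M + N) ≤ sigMin M + ‖N‖ := by
  rw [← sub_le_iff_le_add]
  refine le_sigMin fun w hw => ?_
  calc sigMin (M + N) - ‖N‖ ≤ enorm2 ((M + N) *ᵥ w) - ‖N‖ := by
        gcongr; exact sigMin_le_enorm2_mulVec _ hw
    _ ≤ enorm2 (M *ᵥ w) + ‖N‖ * enorm2 w - ‖N‖ := by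
        rw [Matrix.add_mulVec]; gcongr
        exact (enorm2_add_le _ _).trans (add_le_add_right (enorm2_mulVec_le N w) _)
    _ = enorm2 (M *ᵥ w) := by rw [hw, mul_one, add_sub_cancel_right]

end SigMin

section Square

variable {ι : Type*} [Fintype ι] [DecidableEq ι] [Nonempty ι]

lemma sigMin_smul_one (c : ℂ) : sigMin (c • 1 : Matrix ι ι ℂ) = ‖c‖ := by
  have hunit : ∀ w, enorm2 w = 1 → enorm2 ((c • 1 : Matrix ι ι ℂ) *ᵥ w) = ‖c‖ := fun w hw => by
    rw [Matrix.smul_mulVec, Matrix.one_mulVec, enorm2_smul, hw, mul_one]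
  obtain ⟨w, hw⟩ := exists_enorm2_eq_one (ι := ι)
  exact le_antisymm ((sigMin_le_enorm2_mulVec _ hw).trans_eq (hunit w hw))
    (le_sigMin fun w hw => (hunit w hw).ge)

lemma norm_smul_one (c : ℂ) : ‖(c • 1 : Matrix ι ι ℂ)‖ = ‖c‖ := by
  rw [norm_smul, CStarRing.norm_one, mul_one]

lemma norm_le_sigMin_sub_smul_one_add (A : Matrix ι ι ℂ) (z : ℂ) :
    ‖z‖ ≤ sigMin (A - z • 1) + ‖A‖ := by
  have h := sigMin_add_le (A - z • 1) (-A)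
  rwa [show A - z • 1 + -A = (-z) • 1 by rw [neg_smul]; abel, sigMin_smul_one, norm_neg,
    norm_neg] at h

lemma sigMin_sub_add_smul_one_le (A : Matrix ι ι ℂ) (z c : ℂ) :
    sigMin (A - (z + c) • 1) ≤ sigMin (A - z • 1) + ‖c‖ := by
  have h := sigMin_add_le (A - z • 1) (-(c • 1))
  rwa [← sub_eq_add_neg, sub_sub, ← add_smul, norm_neg, norm_smul_one] at h

end Square

lemma bddAbove_re_pspec {n : ℕ} [NeZero n] (ε : ℝ) (A : Matrix (Fin n) (Fin n) ℂ) :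
    BddAbove (Complex.re '' pspec ε A) := by
  refine ⟨ε + ‖A‖, ?_⟩
  rintro _ ⟨z, hz, rfl⟩
  have := norm_le_sigMin_sub_smul_one_add A z
  have : sigMin (A - z • 1) ≤ ε := hz
  linarith [Complex.re_le_norm z]

theorem stmt17_general {n : ℕ} (hn : 1 ≤ n) (A : Matrix (Fin n) (Fin n) ℂ) {ε : ℝ}
    (z : ℂ) (h1 : z ∈ pspec ε A) (h2 : z.re = psa ε A) :
    sigMin (A - z • 1) = ε := by
  have : NeZero n := ⟨by omega⟩
  refine le_antisymm h1 (not_lt.mp fun hlt => ?_)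
  set t := ε - sigMin (A - z • 1)
  have hshift : z + t ∈ pspec ε A := by
    have := sigMin_sub_add_smul_one_le A z t
    rw [Complex.norm_real, Real.norm_of_nonneg (by linarith)] at this
    exact this.trans_eq (by ring)
  have hre := le_csSup (bddAbove_re_pspec ε A) ⟨_, hshift, rfl⟩
  rw [Complex.add_re, Complex.ofReal_re, ← psa, ← h2] at hre
  linarith

theorem stmt17 {n : ℕ} (hn : 1 ≤ n) (A : Matrix (Fin n) (Fin n) ℂ) {ε : ℝ} (hε : 0 < ε)
    (z : ℂ) (h1 : z ∈ pspec ε A) (h2 : z.re = psa ε A) :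
    sigMin (A - z • 1) = ε :=
  stmt17_general hn A z h1 h2
end
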